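/- Let T be a triangulated dg-category over k equipped with a compact t-structure. Then an object E of T̂ is compact if and only if there exist integers a ≤ b with E ∈ T̂^{[a,b]} and, for every i, the cohomology object H^i_t(E) ∈ Ĥ belongs to H = Ĥ ∩ [T]. -/

import Mathlib

/-!
A compact `E` is bounded, and each `H^i_t(E) = (τ_{≤i} τ_{≥i} E)[i]` is compact by precompactness.
Conversely, for `E ∈ T̂^{[a,b]}` the truncation triangle
`τ_{≤m} τ_{≥m} E → τ_{≥m} E → τ_{≥m+1} τ_{≥m} E ≅ τ_{≥m+1} E` exhibits `τ_{≥m} E` as an extension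
of `τ_{≥m+1} E` by `H^m_t(E)[-m]`. Compact objects are closed under shifts and extensions (a
five-lemma chase through the filtered colimits of the hom-groups), so descending induction from
`τ_{≥b+1} E = 0` shows that `τ_{≥a} E ≅ E` is compact. The given truncations are identified with
Mathlib's `TStructure.truncGE` by uniqueness of truncation triangles.
-/

open CategoryTheory Limits Pretriangulated Triangulated

universe v u

namespace TV

variable {C : Type u} [Category.{v} C]

/-- An object `x` of a category is compact (ω-small) if `Hom(x, -)` commutes with all
filtered colimits. -/
def IsCompactObj (x : C) : Prop :=
  ∀ (J : Type v) [SmallCategory J] [IsFiltered J] (F : J ⥤ C) (c : Cocone F),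
    IsColimit c → Nonempty (IsColimit ((coyoneda.obj (Opposite.op x)).mapCocone c))

variable [Preadditive C] [HasZeroObject C] [HasShift C ℤ]
  [∀ (n : ℤ), (shiftFunctor C n).Additive] [Pretriangulated C]

/-- Truncation data for a t-structure: truncation functors `τ_{≤n}`, `τ_{≥n}` together
with the canonical morphisms and the associated distinguished triangles
`τ_{≤n} x ⟶ x ⟶ τ_{≥n+1} x ⟶ (τ_{≤n} x)[1]`. -/
structure Truncation (t : TStructure C) where
  truncLE (n : ℤ) : C ⥤ C
  truncGE (n : ℤ) : C ⥤ C
  truncLE_le (n : ℤ) (x : C) : t.le n ((truncLE n).obj x)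
  truncGE_ge (n : ℤ) (x : C) : t.ge n ((truncGE n).obj x)
  ι (n : ℤ) : truncLE n ⟶ 𝟭 C
  π (n : ℤ) : 𝟭 C ⟶ truncGE n
  δ (n : ℤ) (x : C) : (truncGE (n + 1)).obj x ⟶ ((truncLE n).obj x)⟦(1 : ℤ)⟧
  triangle_mem (n : ℤ) (x : C) :
    Triangle.mk ((ι n).app x) ((π (n + 1)).app x) (δ n x) ∈ distTriang C

/-- The cohomology functor `H^i_t := τ_{≤i} τ_{≥i} (-)[i]` associated to a t-structure
with truncations; it takes values in the heart `Ĥ`. -/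
def Truncation.H {t : TStructure C} (tr : Truncation t) (i : ℤ) : C ⥤ C :=
  tr.truncGE i ⋙ tr.truncLE i ⋙ shiftFunctor C i

/-- A t-structure (with truncations) is *compact* (Définition 2.2) if it is bounded
(compact objects have bounded amplitude), precompact (truncations preserve compact
objects), and the positive part `T̂^{≥0}` is stable under filtered colimits. -/
structure IsCompactTStructure (t : TStructure C) (tr : Truncation t) : Prop where
  bounded : ∀ x : C, IsCompactObj x → ∃ a b : ℤ, a ≤ b ∧ t.ge a x ∧ t.le b x
  precompact_le : ∀ (x : C) (n : ℤ), IsCompactObj x → IsCompactObj ((tr.truncLE n).obj x)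
  precompact_ge : ∀ (x : C) (n : ℤ), IsCompactObj x → IsCompactObj ((tr.truncGE n).obj x)
  ge_stable : ∀ (J : Type v) [SmallCategory J] [IsFiltered J] (F : J ⥤ C) (c : Cocone F),
    IsColimit c → (∀ j : J, t.ge 0 (F.obj j)) → t.ge 0 c.pt

end TV

namespace TV

variable {C : Type u} [Category.{v} C]

section CompactObjects

attribute [local instance] Cardinal.fact_isRegular_aleph0

lemma isCompactObj_iff_isFinitelyPresentable (x : C) :
    IsCompactObj x ↔ IsFinitelyPresentable.{v} x := by
  rw [isFinitelyPresentable_iff_preservesFilteredColimitsOfSize]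
  exact ⟨fun h ↦ ⟨fun J _ _ ↦ ⟨fun {F} ↦ ⟨fun hc ↦ h J F _ hc⟩⟩⟩,
    fun _ J _ _ F _ hc ↦ ⟨isColimitOfPreserves _ hc⟩⟩

lemma IsCompactObj.of_iso {x y : C} (hx : IsCompactObj x) (e : x ≅ y) : IsCompactObj y := by
  rw [isCompactObj_iff_isFinitelyPresentable] at hx ⊢
  exact isCardinalPresentable_of_iso e _

lemma isCompactObj_iff_of_isEquivalence (F : C ⥤ C) [F.IsEquivalence] (x : C) :
    IsCompactObj (F.obj x) ↔ IsCompactObj x := by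
  simp only [isCompactObj_iff_isFinitelyPresentable, isCardinalPresentable_iff_of_isEquivalence]

section Filtered

variable {x : C} (hx : IsCompactObj x) {J : Type v} [SmallCategory J] [IsFiltered J]
  {F : J ⥤ C} {c : Cocone F} (hc : IsColimit c)
include hx hc

lemma IsCompactObj.exists_hom (f : x ⟶ c.pt) : ∃ (j : J) (p : x ⟶ F.obj j), p ≫ c.ι.app j = f :=
  have : PreservesColimit F (coyoneda.obj (.op x)) := ⟨fun hc ↦ hx J F _ hc⟩
  exists_hom_of_preservesColimit_coyoneda hc f

lemma IsCompactObj.exists_eq {i j : J} (f : x ⟶ F.obj i) (g : x ⟶ F.obj j)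
    (h : f ≫ c.ι.app i = g ≫ c.ι.app j) :
    ∃ (k : J) (u : i ⟶ k) (v : j ⟶ k), f ≫ F.map u = g ≫ F.map v :=
  have : PreservesColimit F (coyoneda.obj (.op x)) := ⟨fun hc ↦ hx J F _ hc⟩
  exists_eq_of_preservesColimit_coyoneda hc f g h

lemma IsCompactObj.exists_map_eq_zero [Preadditive C] {i : J} (f : x ⟶ F.obj i)
    (h : f ≫ c.ι.app i = 0) : ∃ (j : J) (u : i ⟶ j), f ≫ F.map u = 0 := by
  obtain ⟨j, u, v, huv⟩ := hx.exists_eq hc f 0 (by rw [h, zero_comp])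
  exact ⟨j, u, by rw [huv, zero_comp]⟩

end Filtered

lemma isCompactObj_of_exists [Preadditive C] (x : C)
    (hsurj : ∀ (J : Type v) [SmallCategory J] [IsFiltered J] (F : J ⥤ C) (c : Cocone F),
      IsColimit c → ∀ f : x ⟶ c.pt, ∃ (j : J) (p : x ⟶ F.obj j), p ≫ c.ι.app j = f)
    (hinj : ∀ (J : Type v) [SmallCategory J] [IsFiltered J] (F : J ⥤ C) (c : Cocone F),
      IsColimit c → ∀ (i : J) (f : x ⟶ F.obj i), f ≫ c.ι.app i = 0 →
        ∃ (j : J) (u : i ⟶ j), f ≫ F.map u = 0) :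
    IsCompactObj x := by
  intro J _ _ F c hc
  refine ⟨Types.FilteredColimit.isColimitOf' _ _ (fun f ↦ ?_) (fun i (f g : x ⟶ F.obj i) hfg ↦ ?_)⟩
  · obtain ⟨j, p, hp⟩ := hsurj J F c hc f
    exact ⟨j, p, hp.symm⟩
  · obtain ⟨j, u, hu⟩ := hinj J F c hc i (f - g) (by
      rw [Preadditive.sub_comp, sub_eq_zero]; exact hfg)
    exact ⟨j, u, by rwa [Preadditive.sub_comp, sub_eq_zero] at hu⟩

lemma IsCompactObj.of_isZero [Preadditive C] {x : C} (h : IsZero x) : IsCompactObj x :=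
  isCompactObj_of_exists x
    (fun J _ _ _ _ _ _ ↦ ⟨(IsFiltered.nonempty (C := J)).some, h.to_ _, h.eq_of_src _ _⟩)
    (fun _ _ _ _ _ _ i _ _ ↦ ⟨i, 𝟙 i, h.eq_of_src _ _⟩)

lemma IsCompactObj.shift [HasShift C ℤ] {x : C} (hx : IsCompactObj x) (n : ℤ) :
    IsCompactObj (x⟦n⟧) :=
  (isCompactObj_iff_of_isEquivalence (shiftFunctor C n) x).2 hx

lemma IsCompactObj.of_shift [HasShift C ℤ] {x : C} {n : ℤ} (hx : IsCompactObj (x⟦n⟧)) :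
    IsCompactObj x :=
  (isCompactObj_iff_of_isEquivalence (shiftFunctor C n) x).1 hx

end CompactObjects

variable [Preadditive C] [HasZeroObject C] [HasShift C ℤ]
  [∀ (n : ℤ), (shiftFunctor C n).Additive] [Pretriangulated C]

section Extensions

variable {T : Triangle C} (hT : T ∈ distTriang C) (h₁ : IsCompactObj T.obj₁)
  {J : Type v} [SmallCategory J] [IsFiltered J] {F : J ⥤ C} {c : Cocone F} (hc : IsColimit c)
include hT h₁ hc

lemma exists_hom_obj₃_of_distTriang (h₂ : IsCompactObj T.obj₂) (u : T.obj₃ ⟶ c.pt) :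
    ∃ (j : J) (p : T.obj₃ ⟶ F.obj j), p ≫ c.ι.app j = u := by
  obtain ⟨j, v, hv⟩ := h₂.exists_hom hc (T.mor₂ ≫ u)
  obtain ⟨k, e, he⟩ := h₁.exists_map_eq_zero hc (T.mor₁ ≫ v) (by
    rw [Category.assoc, hv, ← Category.assoc, comp_distTriang_mor_zero₁₂ _ hT, zero_comp])
  obtain ⟨g, hg⟩ := Triangle.yoneda_exact₂ _ hT (v ≫ F.map e) (by rwa [← Category.assoc])
  obtain ⟨z, hz⟩ := Triangle.yoneda_exact₃ _ hT (u - (g ≫ c.ι.app k : T.obj₃ ⟶ c.pt)) (by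
    rw [Preadditive.comp_sub, ← Category.assoc, ← hg, Category.assoc, c.w, hv, sub_self])
  obtain ⟨l, w, hw⟩ := (h₁.shift 1).exists_hom hc z
  refine ⟨IsFiltered.max k l,
    g ≫ F.map (IsFiltered.leftToMax k l) + T.mor₃ ≫ w ≫ F.map (IsFiltered.rightToMax k l), ?_⟩
  rw [Preadditive.add_comp, Category.assoc, Category.assoc, Category.assoc, c.w, c.w, hw, ← hz]
  abel

lemma exists_map_eq_zero_obj₂_of_distTriang (h₃ : IsCompactObj T.obj₃) {i : J}
    (d : T.obj₂ ⟶ F.obj i) (hd : d ≫ c.ι.app i = 0) : ∃ (j : J) (u : i ⟶ j), d ≫ F.map u = 0 := by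
  obtain ⟨m, e₁, he₁⟩ := h₁.exists_map_eq_zero hc (T.mor₁ ≫ d) (by
    rw [Category.assoc, hd, comp_zero])
  obtain ⟨z, hz⟩ := Triangle.yoneda_exact₂ _ hT (d ≫ F.map e₁) (by rwa [← Category.assoc])
  obtain ⟨y, hy⟩ := Triangle.yoneda_exact₃ _ hT (z ≫ c.ι.app m) (by
    rw [← Category.assoc, ← hz, Category.assoc, c.w, hd])
  obtain ⟨l, w, hw⟩ := (h₁.shift 1).exists_hom hc y
  obtain ⟨p, e₂, e₃, he⟩ := h₃.exists_eq hc z (T.mor₃ ≫ w) (by rw [hy, Category.assoc, hw])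
  refine ⟨p, e₁ ≫ e₂, ?_⟩
  rw [F.map_comp, ← Category.assoc, hz, Category.assoc, he, ← Category.assoc,
    ← Category.assoc, comp_distTriang_mor_zero₂₃ _ hT, zero_comp, zero_comp]

/- Lifting is checked at the third vertex of the inverse rotation `T.obj₃⟦-1⟧ ⟶ T.obj₁ ⟶ T.obj₂`,
where it only needs exactness of `Hom(-, Y)` at the second and third vertices. -/
omit hc in
lemma isCompactObj_obj₂_of_distTriang (h₃ : IsCompactObj T.obj₃) : IsCompactObj T.obj₂ :=
  isCompactObj_of_exists _
    (fun _ _ _ _ _ hc u ↦ exists_hom_obj₃_of_distTriang (inv_rot_of_distTriang T hT)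
      (h₃.shift (-1)) hc h₁ u)
    (fun _ _ _ _ _ hc _ d hd ↦ exists_map_eq_zero_obj₂_of_distTriang hT h₁ hc h₃ d hd)

end Extensions

/- Mathlib's `TStructure.isIso_truncGE_map_truncGEπ_app` assumes `IsTriangulated C`; the universal
property of `truncGE` suffices. -/
lemma isIso_truncGE_map_truncGEπ_app (t : TStructure C) {a b : ℤ} (h : a ≤ b) (X : C) :
    IsIso ((t.truncGE b).map ((t.truncGEπ a).app X)) := by
  have : t.IsGE ((t.truncGE b).obj X) a := t.isGE_truncGE_obj _ _ _ h
  refine ⟨t.descTruncGE (t.descTruncGE ((t.truncGEπ b).app X) a) b, ?_, ?_⟩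
  · exact t.from_truncGE_obj_ext (by simp)
  · exact t.from_truncGE_obj_ext (t.from_truncGE_obj_ext (by simp))

namespace Truncation

variable {t : TStructure C} (tr : Truncation t)

lemma nonempty_truncGE_iso (n : ℤ) (X : C) :
    Nonempty ((tr.truncGE n).obj X ≅ (t.truncGE n).obj X) := by
  obtain ⟨m, rfl⟩ : ∃ m, n = m + 1 := ⟨n - 1, by omega⟩
  obtain ⟨e, -⟩ := t.triangle_iso_exists (tr.triangle_mem m X)
    (t.triangleLTGE_distinguished (m + 1) X) (Iso.refl X) m (m + 1)
    ⟨tr.truncLE_le m X⟩ ⟨tr.truncGE_ge (m + 1) X⟩ (t.isLE_truncLT_obj X (m + 1) m)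
    (t.isGE_truncGE_obj X (m + 1) (m + 1))
  exact ⟨Triangle.π₃.mapIso e⟩

lemma isZero_truncGE_of_le {n b : ℤ} (h : b < n) {X : C} (hX : t.le b X) :
    IsZero ((tr.truncGE n).obj X) := by
  obtain ⟨e⟩ := tr.nonempty_truncGE_iso n X
  have : t.IsLE X (n - 1) := ⟨t.le_monotone (by omega) _ hX⟩
  exact (t.isZero_truncGE_obj_of_isLE (n - 1) n (by omega) X).of_iso e

lemma nonempty_truncGE_iso_self {n : ℤ} {X : C} (hX : t.ge n X) :
    Nonempty ((tr.truncGE n).obj X ≅ X) := by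
  obtain ⟨e⟩ := tr.nonempty_truncGE_iso n X
  have : t.IsGE X n := ⟨hX⟩
  exact ⟨e ≪≫ (asIso ((t.truncGEπ n).app X)).symm⟩

lemma nonempty_truncGE_truncGE_iso {a b : ℤ} (h : a ≤ b) (X : C) :
    Nonempty ((tr.truncGE b).obj ((tr.truncGE a).obj X) ≅ (tr.truncGE b).obj X) := by
  obtain ⟨e₁⟩ := tr.nonempty_truncGE_iso b ((tr.truncGE a).obj X)
  obtain ⟨e₂⟩ := tr.nonempty_truncGE_iso a X
  obtain ⟨e₃⟩ := tr.nonempty_truncGE_iso b X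
  have := isIso_truncGE_map_truncGEπ_app t h X
  exact ⟨e₁ ≪≫ (t.truncGE b).mapIso e₂ ≪≫
    (asIso ((t.truncGE b).map ((t.truncGEπ a).app X))).symm ≪≫ e₃.symm⟩

lemma isCompactObj_truncGE_of_succ (m : ℤ) (X : C) (hH : IsCompactObj ((tr.H m).obj X))
    (hX : IsCompactObj ((tr.truncGE (m + 1)).obj X)) : IsCompactObj ((tr.truncGE m).obj X) := by
  obtain ⟨e⟩ := tr.nonempty_truncGE_truncGE_iso (show m ≤ m + 1 by omega) X
  exact isCompactObj_obj₂_of_distTriang (tr.triangle_mem m ((tr.truncGE m).obj X))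
    (IsCompactObj.of_shift hH) (hX.of_iso e.symm)

lemma isCompactObj_of_isCompactObj_H {a b : ℤ} {E : C} (ha : t.ge a E) (hb : t.le b E)
    (hH : ∀ i, IsCompactObj ((tr.H i).obj E)) : IsCompactObj E := by
  have hGE : ∀ m ≤ b + 1, IsCompactObj ((tr.truncGE m).obj E) :=
    Int.leInductionDown (IsCompactObj.of_isZero (tr.isZero_truncGE_of_le (by omega) hb))
      fun n _ hn ↦ tr.isCompactObj_truncGE_of_succ (n - 1) E (hH _) (by rwa [sub_add_cancel])
  obtain ⟨e⟩ := tr.nonempty_truncGE_iso_self (t.ge_antitone (min_le_left a (b + 1)) _ ha)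
  exact (hGE _ (min_le_right _ _)).of_iso e

end Truncation

lemma IsCompactTStructure.isCompactObj_H {t : TStructure C} {tr : Truncation t}
    (ht : IsCompactTStructure t tr) {E : C} (hE : IsCompactObj E) (i : ℤ) :
    IsCompactObj ((tr.H i).obj E) :=
  (ht.precompact_le _ i (ht.precompact_ge E i hE)).shift i

theorem compact_iff_bounded_with_compact_cohomology_general
    (t : TStructure C) (tr : Truncation t) (ht : IsCompactTStructure t tr)
    (E : C) :
    IsCompactObj E ↔
      ((∃ a b : ℤ, a ≤ b ∧ t.ge a E ∧ t.le b E) ∧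
        ∀ i : ℤ, IsCompactObj ((tr.H i).obj E)) :=
  ⟨fun hE ↦ ⟨ht.bounded E hE, ht.isCompactObj_H hE⟩,
    fun ⟨⟨_, _, _, ha, hb⟩, hH⟩ ↦ tr.isCompactObj_of_isCompactObj_H ha hb hH⟩

/-- Let `T` be a triangulated dg-category over `k` with a compact
t-structure.  An object `E ∈ T̂` is compact if and only if there are integers `a ≤ b`
with `E ∈ T̂^{[a,b]}` and, for every `i`, the cohomology object `H^i_t(E) ∈ Ĥ` belongs
to `H = Ĥ ∩ [T]`, i.e. is a compact object of `[T̂]`. -/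
theorem compact_iff_bounded_with_compact_cohomology
    (k : Type u) [Field k] [IsAlgClosed k] [CharZero k]
    [Linear k C] [HasColimits C]
    (t : TStructure C) (tr : Truncation t) (ht : IsCompactTStructure t tr)
    (E : C) :
    IsCompactObj E ↔
      ((∃ a b : ℤ, a ≤ b ∧ t.ge a E ∧ t.le b E) ∧
        ∀ i : ℤ, IsCompactObj ((tr.H i).obj E)) :=
  compact_iff_bounded_with_compact_cohomology_general t tr ht E

end TV
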